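/- For all integers x ≥ 1 and m ≥ x+2, twice the number of codewords of C(m,x) whose x+2 leftmost bits are 1 followed by x+1 zeros (i.e., codewords starting with 1 0^{x+1} from the left, Group 4) is N(m−x−1,x). -/

import Mathlib

/-!
Deleting the leading `1 0^x` maps Group 4 bijectively onto the codewords of length `m - x - 1`
that start with `0`: no forbidden pattern is created or destroyed, since the run of `x + 1` zeros
at the junction is too long to be the middle of one. Complementing every bit is a symmetry of
`C(k, x)` exchanging the codewords starting with `0` and with `1`, so these are half of
`N(m - x - 1, x)`.
-/

/-- `noForbidden m x c` says the binary word `c = (c_{m-1}, …, c_0)` contains no contiguous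
subword of the form `0 1^y 0` or `1 0^y 1` for any `1 ≤ y ≤ x`. -/
def noForbidden (m x : ℕ) (c : Fin m → Bool) : Prop :=
  ∀ j y : ℕ, 1 ≤ y → y ≤ x → (h : j + y + 1 < m) →
    ¬ ((∀ k, 1 ≤ k → (hk : k ≤ y) → c ⟨j + k, by omega⟩ = ! c ⟨j, by omega⟩) ∧
        c ⟨j + y + 1, h⟩ = c ⟨j, by omega⟩)

/-- `N(m, x)`: the cardinality of the LOCO code `C(m, x)`. -/
noncomputable def locoN (m x : ℕ) : ℕ := Nat.card {c : Fin m → Bool // noForbidden m x c}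

/-- `N(k, x)` extended to integer `k` by the convention `N(k, x) = 2` for `k ≤ 1`. -/
noncomputable def Nex (k : ℤ) (x : ℕ) : ℤ := if k ≤ 1 then 2 else (locoN k.toNat x : ℤ)

/-- Strict lexicographic order on binary words, comparing bits from `c_{m-1}`
(most significant) down to `c_0`, with `0 < 1`. -/
def lexLt (m : ℕ) (d c : Fin m → Bool) : Prop :=
  ∃ i : Fin m, d i = false ∧ c i = true ∧ ∀ j : Fin m, (i : ℕ) < (j : ℕ) → d j = c j

/-- The index `g(m, x, c)` of a codeword: the number of codewords of `C(m, x)` that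
precede `c` in lexicographic order. -/
noncomputable def locoIdx (m x : ℕ) (c : Fin m → Bool) : ℕ :=
  Nat.card {d : Fin m → Bool // noForbidden m x d ∧ lexLt m d c}

section Complement

variable {m x : ℕ}

theorem noForbidden.compl {c : Fin m → Bool} (hc : noForbidden m x c) :
    noForbidden m x (fun i => !c i) := by
  intro j y hy hyx hj ⟨hrun, hend⟩
  refine hc j y hy hyx hj ⟨fun k hk hky => ?_, ?_⟩
  · simpa using hrun k hk hky
  · simpa using hend

theorem noForbidden_compl_iff {c : Fin m → Bool} :
    noForbidden m x (fun i => !c i) ↔ noForbidden m x c :=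
  ⟨fun h => by simpa using h.compl, noForbidden.compl⟩

theorem card_noForbidden_apply_true (i : Fin m) :
    Nat.card {c // noForbidden m x c ∧ c i = true} =
      Nat.card {c // noForbidden m x c ∧ c i = false} :=
  Nat.card_congr <| Equiv.subtypeEquiv
    { toFun := fun c i => !c i, invFun := fun c i => !c i
      left_inv := fun c => by simp, right_inv := fun c => by simp }
    fun c => by simp [noForbidden_compl_iff]

theorem locoN_eq_two_mul_card (i : Fin m) :
    locoN m x = 2 * Nat.card {c // noForbidden m x c ∧ c i = false} := by
  classical
  have hsplit : {c // noForbidden m x c} ≃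
      {c // noForbidden m x c ∧ c i = true} ⊕ {c // noForbidden m x c ∧ c i = false} :=
    (Equiv.subtypeEquivRight fun c => by cases c i <;> simp).trans
      (subtypeOrEquiv _ _ fun p hp hq c hc => by simpa [(hp c hc).2] using (hq c hc).2)
  rw [locoN, Nat.card_congr hsplit, Nat.card_sum, card_noForbidden_apply_true]
  ring

end Complement

section Prefix

variable {m t x : ℕ}

theorem noForbidden.comp_castLE {c : Fin m → Bool} (hc : noForbidden m x c) (h : t ≤ m) :
    noForbidden t x (c ∘ Fin.castLE h) :=
  fun j y hy hyx hj => hc j y hy hyx (by omega)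

/-- A forbidden pattern `b a^y b` of `c` reaching above position `t - 1` has its `a^y` ending in
the zero run `c_{m-2} … c_{t-1}`, so it is `1 0^y 1` ending at the top bit; then its first bit
lies in that run as well, because the run is longer than `x`. -/
theorem noForbidden_of_comp_castLE (hm : t + x + 1 ≤ m) {c : Fin m → Bool}
    (hzero : ∀ i : Fin m, t - 1 ≤ (i : ℕ) → (i : ℕ) < m - 1 → c i = false)
    (hc : noForbidden t x (c ∘ Fin.castLE (by omega))) : noForbidden m x c := by
  intro j y hy hyx hj ⟨hrun, hend⟩
  by_cases hjt : j + y + 1 < t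
  · exact hc j y hy hyx hjt ⟨hrun, hend⟩
  have hlast : c ⟨j + y, by omega⟩ = false := hzero _ (by simp; omega) (by simp; omega)
  have hfirst : c ⟨j, by omega⟩ = true := by simpa [hlast] using (hrun y hy le_rfl).symm
  have htop : j + y + 1 = m - 1 := by
    by_contra hne
    simp [hzero ⟨j + y + 1, hj⟩ (by simp; omega) (by simp; omega), hfirst] at hend
  simp [hzero ⟨j, by omega⟩ (by simp; omega) (by simp; omega)] at hfirst

def withLeadingOne (m : ℕ) (s : Fin t → Bool) : Fin m → Bool :=
  fun i => if h : (i : ℕ) < t then s ⟨i, h⟩ else decide ((i : ℕ) = m - 1)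

theorem withLeadingOne_comp_castLE (h : t ≤ m) (s : Fin t → Bool) :
    withLeadingOne m s ∘ Fin.castLE h = s :=
  funext fun i => dif_pos i.isLt

theorem withLeadingOne_apply_of_pred_le (ht : 0 < t) (htm : t < m) {s : Fin t → Bool}
    (hs : s ⟨t - 1, by omega⟩ = false) {i : Fin m} (hi : t - 1 ≤ (i : ℕ)) :
    withLeadingOne m s i = decide ((i : ℕ) = m - 1) := by
  unfold withLeadingOne
  split_ifs with h
  · rw [show (⟨i, h⟩ : Fin t) = ⟨t - 1, by omega⟩ from Fin.ext (by simp; omega), hs]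
    exact (decide_eq_false (by omega)).symm
  · rfl

theorem withLeadingOne_comp_castLE_eq (h : t ≤ m) {c : Fin m → Bool}
    (hc : ∀ i : Fin m, t ≤ (i : ℕ) → c i = decide ((i : ℕ) = m - 1)) :
    withLeadingOne m (c ∘ Fin.castLE h) = c := by
  funext i
  unfold withLeadingOne
  split_ifs with hi
  · rfl
  · exact (hc i (by omega)).symm

end Prefix

section Group4

variable {x m : ℕ}

theorem group4_iff (hm : x + 2 ≤ m) (c : Fin m → Bool) :
    (c ⟨m - 1, by omega⟩ = true ∧ ∀ k, 1 ≤ k → k ≤ x + 1 → c ⟨m - 1 - k, by omega⟩ = false) ↔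
      ∀ i : Fin m, m - x - 2 ≤ (i : ℕ) → c i = decide ((i : ℕ) = m - 1) := by
  constructor
  · rintro ⟨htop, hzero⟩ i hi
    by_cases hit : (i : ℕ) = m - 1
    · rw [show i = ⟨m - 1, by omega⟩ from Fin.ext hit]
      simpa using htop
    · have hk := hzero (m - 1 - i) (by omega) (by omega)
      rw [show (⟨m - 1 - (m - 1 - i), by omega⟩ : Fin m) = i from Fin.ext (by simp; omega)] at hk
      simpa [hit] using hk
  · intro h
    exact ⟨by simpa using h ⟨m - 1, by omega⟩ (by simp; omega),
      fun k hk1 hk2 => by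
        simpa [show m - 1 - k ≠ m - 1 by omega] using h ⟨m - 1 - k, by omega⟩ (by simp; omega)⟩

def group4Equiv (hm : x + 2 ≤ m) :
    {c : Fin m → Bool // noForbidden m x c ∧ c ⟨m - 1, by omega⟩ = true ∧
        ∀ k, 1 ≤ k → k ≤ x + 1 → c ⟨m - 1 - k, by omega⟩ = false} ≃
      {s : Fin (m - x - 1) → Bool // noForbidden (m - x - 1) x s ∧
        s ⟨m - x - 2, by omega⟩ = false} :=
  have h : m - x - 1 ≤ m := by omega
  (Equiv.subtypeEquivRight fun c => and_congr_right' (group4_iff hm c)).trans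
  { toFun c := ⟨c.1 ∘ Fin.castLE h, c.2.1.comp_castLE h,
      (c.2.2 ⟨m - x - 2, by omega⟩ le_rfl).trans
        (decide_eq_false (show m - x - 2 ≠ m - 1 by omega))⟩
    invFun s := ⟨withLeadingOne m s.1, by
        refine noForbidden_of_comp_castLE (t := m - x - 1) (by omega) (fun i hi hlt => ?_) ?_
        · exact (withLeadingOne_apply_of_pred_le (by omega) (by omega) s.2.2 hi).trans
            (decide_eq_false (by omega))
        · rw [withLeadingOne_comp_castLE]
          exact s.2.1,
      fun i hi => withLeadingOne_apply_of_pred_le (by omega) (by omega) s.2.2 (by omega)⟩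
    left_inv c := Subtype.ext <| withLeadingOne_comp_castLE_eq h fun i hi => c.2.2 i (by omega)
    right_inv s := Subtype.ext <| withLeadingOne_comp_castLE h s.1 }

end Group4

theorem locoN_one (x : ℕ) : locoN 1 x = 2 := by
  have hall (c : Fin 1 → Bool) : noForbidden 1 x c := fun j y _ _ hj => by omega
  rw [locoN, Nat.card_congr (Equiv.subtypeUnivEquiv hall)]
  simp

theorem Nex_natCast {t : ℕ} (ht : 1 ≤ t) (x : ℕ) : Nex t x = locoN t x := by
  rcases ht.eq_or_lt with rfl | ht
  · simp [Nex, locoN_one]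
  · simp [Nex, show ¬ t ≤ 1 by omega]

theorem loco_group4_card (m x : ℕ) (hm : x + 2 ≤ m) :
    2 * (Nat.card {c : Fin m → Bool // noForbidden m x c ∧
          c ⟨m - 1, by omega⟩ = true ∧
          ∀ k, 1 ≤ k → k ≤ x + 1 → c ⟨m - 1 - k, by omega⟩ = false} : ℤ)
      = Nex ((m : ℤ) - (x : ℤ) - 1) x := by
  rw [Nat.card_congr (group4Equiv hm), show (m : ℤ) - x - 1 = ((m - x - 1 : ℕ) : ℤ) by omega,
    Nex_natCast (by omega), locoN_eq_two_mul_card ⟨m - x - 2, by omega⟩]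
  push_cast
  rfl
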